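/- Let $\Omega \subset \mathbb{R}^2$ be a bounded convex polygonal domain with boundary $\Gamma$, let $X = H^2(\Omega) \cap H^1_0(\Omega)$. For any $f \in H^{-2}(\Omega)$ (the dual of $X$) and $u \in \tilde H^{-1/2}(\Gamma)$, the ultra weak formulation $(y, \Delta\phi) = -(f,\phi) + \langle u, \partial_n \phi\rangle$ for all $\phi \in X$ has a unique solution $y \in L_2(\Omega)$, and it satisfies the a priori estimate $\|y\|_{L_2(\Omega)} \le C(\|f\|_{H^{-2}(\Omega)} + \|u\|_{\tilde H^{-1/2}(\Gamma)})$. -/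

import Mathlib

/-!
The Laplacian is a continuous bijection of the Banach space `X` onto the Hilbert space `L²(Ω)`,
so by the open mapping theorem it is an isomorphism `e`. The ultra weak formulation asks for
`y` with `⟪y, e φ⟫ = ℓ φ` for the right-hand side `ℓ = u - f ∈ X'`; its unique solution is the
Riesz representative of `ℓ ∘ e⁻¹`, whose norm is at most `‖e⁻¹‖ ‖ℓ‖`.
-/

open InnerProductSpace

namespace ContinuousLinearEquiv

variable {𝕜 X Y : Type*} [RCLike 𝕜] [NormedAddCommGroup X] [NormedSpace 𝕜 X]
  [NormedAddCommGroup Y] [InnerProductSpace 𝕜 Y] [CompleteSpace Y]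

noncomputable def ultraWeakSolution (e : X ≃L[𝕜] Y) (ℓ : StrongDual 𝕜 X) : Y :=
  (toDual 𝕜 Y).symm (ℓ.comp (e.symm : Y →L[𝕜] X))

theorem inner_ultraWeakSolution_apply (e : X ≃L[𝕜] Y) (ℓ : StrongDual 𝕜 X) (φ : X) :
    inner 𝕜 (e.ultraWeakSolution ℓ) (e φ) = ℓ φ := by
  simp [ultraWeakSolution, toDual_symm_apply]

theorem eq_ultraWeakSolution {e : X ≃L[𝕜] Y} {ℓ : StrongDual 𝕜 X} {y : Y}
    (hy : ∀ φ, inner 𝕜 y (e φ) = ℓ φ) : y = e.ultraWeakSolution ℓ := by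
  refine ext_inner_right 𝕜 fun z => ?_
  rw [← e.apply_symm_apply z, hy, inner_ultraWeakSolution_apply]

theorem norm_ultraWeakSolution_le (e : X ≃L[𝕜] Y) (ℓ : StrongDual 𝕜 X) :
    ‖e.ultraWeakSolution ℓ‖ ≤ ‖(e.symm : Y →L[𝕜] X)‖ * ‖ℓ‖ := by
  rw [ultraWeakSolution, LinearIsometryEquiv.norm_map, mul_comm]
  exact ℓ.opNorm_comp_le _

end ContinuousLinearEquiv

/-- Ω ⊂ ℝ² a bounded convex polygonal domain with boundary Γ,
`X = H²(Ω) ∩ H¹₀(Ω)` (with the `H²` norm), `Y = L²(Ω)`.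
The Laplacian `Δ : X → L²(Ω)` is a continuous bijection (elliptic regularity on
convex domains).  The datum `f ∈ H⁻²(Ω)` is a continuous linear functional on `X`,
and `u ∈ H̃^{-1/2}(Γ)` is represented by the continuous linear functional
`φ ↦ ⟨u, ∂ₙφ⟩` on `X`, whose dual norm is exactly the `H̃^{-1/2}(Γ)` norm.
Then the ultra weak formulation `(y, Δφ) = -(f,φ) + ⟨u, ∂ₙφ⟩ ∀ φ ∈ X`
has a unique solution `y ∈ L²(Ω)`, which satisfies
`‖y‖_{L²(Ω)} ≤ C (‖f‖_{H⁻²} + ‖u‖_{H̃^{-1/2}})`. -/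
theorem stmt_0
    {Y X : Type*} [NormedAddCommGroup Y] [InnerProductSpace ℝ Y] [CompleteSpace Y]
    [NormedAddCommGroup X] [NormedSpace ℝ X] [CompleteSpace X]
    (Lap : X →L[ℝ] Y) (hΔ : Function.Bijective Lap) :
    ∃ C : ℝ, 0 < C ∧ ∀ f u : X →L[ℝ] ℝ,
      (∃! y : Y, ∀ φ : X, (inner ℝ y (Lap φ) : ℝ) = -(f φ) + u φ) ∧
      ∀ y : Y, (∀ φ : X, (inner ℝ y (Lap φ) : ℝ) = -(f φ) + u φ) →
        ‖y‖ ≤ C * (‖f‖ + ‖u‖) := by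
  let e : X ≃L[ℝ] Y := .ofBijective Lap (LinearMap.ker_eq_bot_of_injective hΔ.1)
    (LinearMap.range_eq_top.mpr hΔ.2)
  have rhs_eq (f u : X →L[ℝ] ℝ) (φ : X) : -(f φ) + u φ = (u - f) φ := by simp [neg_add_eq_sub]
  set M := ‖(e.symm : Y →L[ℝ] X)‖
  refine ⟨M + 1, by positivity, fun f u => ⟨?_, fun y hy => ?_⟩⟩
  · refine ⟨e.ultraWeakSolution (u - f), fun φ => ?_, fun y hy => ?_⟩
    · rw [rhs_eq]; exact e.inner_ultraWeakSolution_apply _ φ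
    · exact e.eq_ultraWeakSolution fun φ => (hy φ).trans (rhs_eq f u φ)
  rw [e.eq_ultraWeakSolution fun φ => (hy φ).trans (rhs_eq f u φ)]
  calc ‖e.ultraWeakSolution (u - f)‖ ≤ M * ‖u - f‖ := e.norm_ultraWeakSolution_le _
    _ ≤ M * (‖f‖ + ‖u‖) := by gcongr; exact (norm_sub_le _ _).trans_eq (add_comm _ _)
    _ ≤ (M + 1) * (‖f‖ + ‖u‖) := by gcongr; linarith
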